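/- arXiv:2410.06745 — 3 statements merged into one kernel-verified Lean document; each statement's English description precedes it below -/
import Mathlib

section
/- If n is a positive integer with n not congruent to 7 modulo 8, then the n-th coefficient c₁(n) of the series 1/((q)_∞)^{24} (shifted: the coefficient of q^n in q^{-1}/((q)_∞)^{24}, i.e., the coefficient of q^{n+1} in 1/((q)_∞)^{24}) is even. -/
/-!
Over `𝔽₂` the Frobenius gives `f ^ 8 = f(q ^ 8)` for every power series `f`, so
`(q)_∞ ^ 24 = ((q)_∞ ^ 3)(q ^ 8)` is a series in `q ^ 8`, and so is its inverse. Hence the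
coefficient of `q ^ (n + 1)` in `(q)_∞ ^ (-24)` vanishes unless `8 ∣ n + 1`.
-/

open PowerSeries Finset

noncomputable def qPochInf (R : Type) [CommRing R] (m : ℕ) : PowerSeries R :=
  PowerSeries.mk fun N =>
    PowerSeries.coeff (R := R) N (∏ n ∈ Finset.Icc 1 N, (1 - PowerSeries.X ^ (m * n)))

namespace PowerSeries

theorem map_iterateFrobenius_expand {R : Type*} [CommRing R] (p : ℕ) [ExpChar R p]
    (f : R⟦X⟧) (n : ℕ) :
    map (iterateFrobenius R p n) (expand (p ^ n) (pow_ne_zero n (expChar_ne_zero R p)) f) =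
      f ^ p ^ n :=
  MvPowerSeries.map_iterateFrobenius_expand p (expChar_ne_zero R p) f n

theorem expand_inv {k : Type*} [Field k] (p : ℕ) (hp : p ≠ 0) (φ : k⟦X⟧) :
    expand p hp φ⁻¹ = (expand p hp φ)⁻¹ := by
  by_cases h : constantCoeff φ = 0
  · rw [inv_eq_zero.mpr h, inv_eq_zero.mpr (by rwa [constantCoeff_expand]), map_zero]
  · rw [eq_inv_iff_mul_eq_one (by rwa [constantCoeff_expand]), ← map_mul,
      PowerSeries.inv_mul_cancel φ h, map_one]

end PowerSeries

theorem c1_even_of_not_seven_mod_eight_general (n : ℕ) (h : n % 8 ≠ 7) :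
    PowerSeries.coeff (R := ZMod 2) (n + 1) (((qPochInf (ZMod 2) 1) ^ 24)⁻¹) = 0 := by
  have h24 : qPochInf (ZMod 2) 1 ^ 24 = expand (2 ^ 3) (by norm_num)
      (map (iterateFrobenius (ZMod 2) 2 3) (qPochInf (ZMod 2) 1 ^ 3)) := by
    rw [map_pow, map_pow, ← map_expand, map_iterateFrobenius_expand, ← pow_mul]
    norm_num
  rw [h24, ← expand_inv, coeff_expand_of_not_dvd _ _ _ (by norm_num; omega)]

/-- If n ≥ 1 and n ≢ 7 (mod 8), then c₁(n), the coefficient of q^(n+1) in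
1/((q)_∞)^24, is even; equivalently its image in ZMod 2 vanishes. -/
theorem c1_even_of_not_seven_mod_eight (n : ℕ) (hn : 1 ≤ n) (h : n % 8 ≠ 7) :
    PowerSeries.coeff (R := ZMod 2) (n + 1) (((qPochInf (ZMod 2) 1) ^ 24)⁻¹) = 0 :=
  c1_even_of_not_seven_mod_eight_general n h
end

section
/- With c₃(n) the n-th Fourier coefficient of the hauptmodul j₃ (coefficient of q^n in q^{-1}((q)_∞/(q³)_∞)^{12}), we have c₃(4n+1) ≡ 0 (mod 2) for all n ≥ 0. -/
/-! Over `𝔽₂` the series `((q)_∞ / (q³)_∞)^12` is the fourth power of `(q)_∞³ / (q³)_∞³`, and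
`f(q)⁴ = f(q⁴)` in characteristic 2, so it is supported in degrees divisible by 4. -/

open PowerSeries Finset

namespace PowerSeries

theorem inv_pow {k : Type*} [Field k] (φ : k⟦X⟧) (n : ℕ) : (φ ^ n)⁻¹ = φ⁻¹ ^ n := by
  induction n with
  | zero => simp
  | succ n ih => rw [pow_succ, PowerSeries.mul_inv_rev, ih, pow_succ']

theorem pow_expChar_pow_eq_map_expand {R : Type*} [CommRing R] (p : ℕ) [ExpChar R p]
    (f : R⟦X⟧) (n : ℕ) :
    f ^ p ^ n =
      map (iterateFrobenius R p n) (expand (p ^ n) (pow_ne_zero n (expChar_ne_zero R p)) f) :=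
  (MvPowerSeries.map_iterateFrobenius_expand p (expChar_ne_zero R p) f n).symm

theorem coeff_pow_expChar_pow_of_not_dvd {R : Type*} [CommRing R] (p : ℕ) [ExpChar R p]
    (f : R⟦X⟧) {n k : ℕ} (hk : ¬ p ^ n ∣ k) : coeff k (f ^ p ^ n) = 0 := by
  rw [pow_expChar_pow_eq_map_expand, coeff_map, coeff_expand_of_not_dvd _ _ _ hk, map_zero]

end PowerSeries

/-- With c₃(n) the coefficient of q^n in q⁻¹((q)_∞/(q³)_∞)^12, i.e. the coefficient of
q^(n+1) in ((q)_∞)^12/((q³)_∞)^12, we have c₃(4n+1) ≡ 0 (mod 2) for all n ≥ 0. -/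
theorem c3_four_n_plus_one_even (n : ℕ) :
    PowerSeries.coeff (R := ZMod 2) (4 * n + 2)
      ((qPochInf (ZMod 2) 1) ^ 12 * ((qPochInf (ZMod 2) 3) ^ 12)⁻¹) = 0 := by
  have fourth_power : (qPochInf (ZMod 2) 1) ^ 12 * ((qPochInf (ZMod 2) 3) ^ 12)⁻¹ =
      ((qPochInf (ZMod 2) 1) ^ 3 * (qPochInf (ZMod 2) 3)⁻¹ ^ 3) ^ 2 ^ 2 := by
    rw [PowerSeries.inv_pow]
    ring
  rw [fourth_power]
  exact coeff_pow_expChar_pow_of_not_dvd 2 _ (by omega)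
end

section
/- Jacobi's identity: ∑_{n≥0} q^{n²}/((q)_n)² = 1/(q)_∞ as formal power series, where (q)_n = ∏_{k=1}^n (1−q^k); consequently the 6th-order mock theta function φ₆(q) = ∑_{n≥0} (−1)^n (q;q²)_n q^{n²}/(−q;q)_{2n} satisfies φ₆(q) ≡ 1/(q)_∞ (mod 2), i.e., c_{φ₆}(n) ≡ p(n) (mod 2) where p is the partition function. -/
open PowerSeries Finset

/-- The finite q-Pochhammer (q)_n = ∏_{k=1}^n (1 - q^k) over ℤ. -/
noncomputable def qPochFin (n : ℕ) : PowerSeries ℤ :=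
  ∏ k ∈ Finset.Icc 1 n, (1 - PowerSeries.X ^ k)

/-- The series ∑_{n≥0} q^(n²)/((q)_n)², defined coefficientwise via the stabilizing
partial sums (the n-th term has lowest degree n²). -/
noncomputable def jacobiQSum : PowerSeries ℤ :=
  PowerSeries.mk fun N =>
    PowerSeries.coeff (R := ℤ) N (∑ n ∈ Finset.range (N + 1),
      PowerSeries.X ^ (n ^ 2) * (PowerSeries.invOfUnit (qPochFin n) 1) ^ 2)

/-- The 6th order mock theta function
φ₆(q) = ∑_{n≥0} (−1)ⁿ (q;q²)_n q^(n²)/(−q;q)_{2n}, over ZMod 2, defined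
coefficientwise via the stabilizing partial sums. -/
noncomputable def phi6 : PowerSeries (ZMod 2) :=
  PowerSeries.mk fun N =>
    PowerSeries.coeff (R := ZMod 2) N (∑ n ∈ Finset.range (N + 1),
      (-1 : PowerSeries (ZMod 2)) ^ n *
        (∏ k ∈ Finset.range n, (1 - PowerSeries.X ^ (2 * k + 1))) *
        PowerSeries.X ^ (n ^ 2) *
        (∏ k ∈ Finset.range (2 * n), (1 + PowerSeries.X ^ (k + 1)))⁻¹)

/-!
Group the partitions of `N` by the side `n` of their Durfee square. Removing the square leaves,
to its right, a partition into at most `n` parts and, below it, a partition into parts at most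
`n`; conversely any such pair, with sizes adding up to `N - n²`, reassembles into a partition of
`N` with Durfee square of side `n`. Both kinds of partitions are counted by `1/(q)_n`: parts at
most `n` by Euler's product, at most `n` parts by removing the first column, which gives the same
recurrence. Hence `∑ q^{n²}/(q)_n² = ∑ p(N) q^N = 1/(q)_∞`.

Modulo 2, `(-1)^n = 1`, `(-q;q)_{2n} = (q)_{2n} = (q;q²)_n (q²;q²)_n` and `(q²;q²)_n = (q)_n²`
(Frobenius), so the `n`-th term of `φ₆` is `q^{n²}/(q)_n²`.
-/

lemma prod_Icc_one_eq_prod_range {M : Type*} [CommMonoid M] (f : ℕ → M) (n : ℕ) :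
    ∏ k ∈ Icc 1 n, f k = ∏ k ∈ range n, f (k + 1) := by
  induction n with
  | zero => simp
  | succ n ih => rw [prod_Icc_succ_top (by omega), ih, prod_range_succ]

lemma prod_range_two_mul {M : Type*} [CommMonoid M] (f : ℕ → M) (n : ℕ) :
    ∏ i ∈ range (2 * n), f i =
      (∏ i ∈ range n, f (2 * i)) * ∏ i ∈ range n, f (2 * i + 1) := by
  induction n with
  | zero => simp
  | succ n ih =>
    rw [Nat.mul_succ, prod_range_succ, prod_range_succ, ih, prod_range_succ, prod_range_succ]
    ac_rfl

namespace Multiset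

def removeColumns (n : ℕ) (s : Multiset ℕ) : Multiset ℕ :=
  (s.filter (n < ·)).map (· - n)

/-- Puts a block of `n` columns of height `k` in front of the Ferrers diagram of `q`
(a partition when `card q ≤ k`). -/
def addColumns (n k : ℕ) (q : Multiset ℕ) : Multiset ℕ :=
  q.map (· + n) + replicate (k - card q) n

/-- The rows below an `n × n` Durfee square; the rows equal to `n` that complete the square are
removed. -/
def belowSquare (n : ℕ) (s : Multiset ℕ) : Multiset ℕ :=
  s.filter (· ≤ n) - replicate (n - card (s.filter (n < ·))) n

variable {n k : ℕ} {s q r : Multiset ℕ}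

lemma pos_of_mem_removeColumns {x : ℕ} (hx : x ∈ removeColumns n s) : 0 < x := by
  obtain ⟨y, hy, rfl⟩ := mem_map.1 hx
  have := of_mem_filter hy
  omega

lemma pos_of_mem_addColumns (hq : ∀ x ∈ q, 0 < x) (hkn : 0 < n ∨ k ≤ n) {x : ℕ}
    (hx : x ∈ addColumns n k q) : 0 < x := by
  rcases mem_add.1 hx with hx | hx
  · obtain ⟨y, hy, rfl⟩ := mem_map.1 hx
    have := hq y hy
    omega
  · obtain ⟨hk, rfl⟩ := mem_replicate.1 hx
    omega

lemma card_removeColumns : card (removeColumns n s) = card (s.filter (n < ·)) :=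
  card_map _ _

lemma card_addColumns (hq : card q ≤ k) : card (addColumns n k q) = k := by
  rw [addColumns, card_add, card_map, card_replicate]
  omega

lemma sum_addColumns (hq : card q ≤ k) : (addColumns n k q).sum = q.sum + k * n := by
  rw [addColumns, sum_add, sum_map_add, map_id', map_const', sum_replicate, sum_replicate,
    smul_eq_mul, smul_eq_mul, add_assoc, ← add_mul, Nat.add_sub_cancel' hq]

lemma filter_lt_add_filter_le (n : ℕ) (s : Multiset ℕ) :
    s.filter (n < ·) + s.filter (· ≤ n) = s := by
  conv_rhs => rw [← filter_add_not (n < ·) s]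
  exact congrArg _ (filter_congr fun x _ => not_lt.symm)

lemma addColumns_removeColumns_add
    (h : replicate (k - card (s.filter (n < ·))) n ≤ s.filter (· ≤ n)) :
    addColumns n k (removeColumns n s) +
      (s.filter (· ≤ n) - replicate (k - card (s.filter (n < ·))) n) = s := by
  have hmap : (removeColumns n s).map (· + n) = s.filter (n < ·) := by
    rw [removeColumns, map_map]
    conv_rhs => rw [← map_id (s.filter _)]
    exact map_congr rfl fun x hx => Nat.sub_add_cancel (of_mem_filter hx).le
  rw [addColumns, hmap, card_removeColumns, add_assoc, add_tsub_cancel_of_le h,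
    filter_lt_add_filter_le]

lemma addColumns_one_removeColumns_one (hs : ∀ x ∈ s, 0 < x) :
    addColumns 1 (card s) (removeColumns 1 s) = s := by
  have hones : s.filter (· ≤ 1) = replicate (card s - card (s.filter (1 < ·))) 1 := by
    refine eq_replicate.2 ⟨?_, fun x hx => ?_⟩
    · have := congrArg card (filter_lt_add_filter_le 1 s)
      rw [card_add] at this
      omega
    · have := hs x (mem_of_mem_filter hx)
      have := of_mem_filter hx
      omega
  have h := addColumns_removeColumns_add (k := card s) hones.ge
  rwa [hones, tsub_self, add_zero] at h

lemma card_filter_le_eq_card_filter_lt_add_count (n : ℕ) (s : Multiset ℕ) :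
    card (s.filter (n ≤ ·)) = card (s.filter (n < ·)) + count n s := by
  induction s using Multiset.induction_on with
  | empty => simp
  | cons a s ih =>
    simp only [filter_cons, count_cons]
    split_ifs <;> simp <;> omega

lemma mem_and_le_of_mem_belowSquare {x : ℕ} (hx : x ∈ belowSquare n s) : x ∈ s ∧ x ≤ n :=
  mem_filter.1 (mem_of_le tsub_le_self hx)

lemma addColumns_removeColumns_add_belowSquare (h : n ≤ card (s.filter (n ≤ ·))) :
    addColumns n n (removeColumns n s) + belowSquare n s = s := by
  refine addColumns_removeColumns_add ?_
  rw [← le_count_iff_replicate_le, count_filter_of_pos (p := (· ≤ n)) le_rfl]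
  have := card_filter_le_eq_card_filter_lt_add_count n s
  omega

lemma filter_lt_addColumns_add (hq : ∀ x ∈ q, 0 < x) (hr : ∀ x ∈ r, x ≤ n) :
    (addColumns n k q + r).filter (n < ·) = q.map (· + n) := by
  rw [addColumns, filter_add, filter_add, filter_eq_self.2, filter_eq_nil.2, filter_eq_nil.2,
    add_zero, add_zero]
  · exact fun x hx => not_lt.2 (hr x hx)
  · exact fun x hx => (eq_of_mem_replicate hx).not_gt
  · intro x hx
    obtain ⟨y, hy, rfl⟩ := mem_map.1 hx
    have := hq y hy
    omega

lemma removeColumns_addColumns_add (hq : ∀ x ∈ q, 0 < x) (hr : ∀ x ∈ r, x ≤ n) :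
    removeColumns n (addColumns n k q + r) = q := by
  rw [removeColumns, filter_lt_addColumns_add hq hr, map_map]
  conv_rhs => rw [← map_id q]
  exact map_congr rfl fun x _ => Nat.add_sub_cancel x n

lemma belowSquare_addColumns_add (hq : ∀ x ∈ q, 0 < x) (hr : ∀ x ∈ r, x ≤ n) :
    belowSquare n (addColumns n n q + r) = r := by
  have hle : (addColumns n n q).filter (· ≤ n) = replicate (n - card q) n := by
    rw [addColumns, filter_add, filter_eq_nil.2, zero_add, filter_eq_self.2]
    · exact fun x hx => (eq_of_mem_replicate hx).le
    · intro x hx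
      obtain ⟨y, hy, rfl⟩ := mem_map.1 hx
      have := hq y hy
      omega
  rw [belowSquare, filter_lt_addColumns_add hq hr, card_map, filter_add, hle,
    filter_eq_self.2 hr, add_tsub_cancel_left]

lemma le_card_filter_addColumns_add (hq : card q ≤ n) :
    n ≤ card ((addColumns n n q + r).filter (n ≤ ·)) := by
  calc n = card (addColumns n n q) := (card_addColumns hq).symm
    _ = card ((addColumns n n q).filter (n ≤ ·)) := by
      rw [filter_eq_self.2]
      intro x hx
      rcases mem_add.1 hx with hx | hx
      · obtain ⟨y, -, rfl⟩ := mem_map.1 hx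
        exact Nat.le_add_left n y
      · exact (eq_of_mem_replicate hx).ge
    _ ≤ card ((addColumns n n q + r).filter (n ≤ ·)) :=
      card_le_card (filter_le_filter _ (le_add_right _ _))

end Multiset

namespace Nat.Partition

open Multiset (removeColumns addColumns belowSquare)

lemma card_parts_le {N : ℕ} (p : N.Partition) : Multiset.card p.parts ≤ N := by
  simpa [p.parts_sum] using Multiset.card_nsmul_le_sum (fun x hx => p.parts_pos hx)

lemma card_filter_card_parts_eq (N k : ℕ) :
    #{p : (N + k).Partition | Multiset.card p.parts = k} =
      #{p : N.Partition | Multiset.card p.parts ≤ k} := by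
  refine card_bij'
    (fun p hp => ⟨removeColumns 1 p.parts, Multiset.pos_of_mem_removeColumns, ?_⟩)
    (fun q hq => ⟨addColumns 1 k q.parts,
      Multiset.pos_of_mem_addColumns (fun _ => q.parts_pos) (.inl one_pos), ?_⟩)
    (fun p hp => ?_) (fun q hq => ?_) (fun p hp => ?_) (fun q _ => ?_)
  · have hk : Multiset.card p.parts = k := (mem_filter.1 hp).2
    have h := congrArg Multiset.sum (Multiset.addColumns_one_removeColumns_one fun _ => p.parts_pos)
    rw [Multiset.sum_addColumns (Multiset.card_removeColumns.trans_le
      (Multiset.card_le_card (Multiset.filter_le _ _))), p.parts_sum] at h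
    omega
  · rw [Multiset.sum_addColumns (mem_filter.1 hq).2, q.parts_sum, mul_one]
  · simpa [Multiset.card_removeColumns] using
      (Multiset.card_le_card (Multiset.filter_le _ _)).trans (mem_filter.1 hp).2.le
  · simpa using Multiset.card_addColumns (mem_filter.1 hq).2
  · ext1
    have hk : Multiset.card p.parts = k := (mem_filter.1 hp).2
    simpa [hk] using Multiset.addColumns_one_removeColumns_one fun _ => p.parts_pos
  · ext1
    simpa using Multiset.removeColumns_addColumns_add (r := 0) (fun _ => q.parts_pos) (by simp)

lemma card_filter_card_parts_le_zero (N : ℕ) :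
    #{p : N.Partition | Multiset.card p.parts ≤ 0} = if N = 0 then 1 else 0 := by
  split_ifs with hN
  · subst hN
    simp
  · refine Finset.card_eq_zero.2 (filter_eq_empty_iff.2 fun p _ h => hN ?_)
    exact p.parts_sum ▸ by simp_all

lemma card_filter_card_parts_le_succ (N k : ℕ) :
    #{p : N.Partition | Multiset.card p.parts ≤ k + 1} =
      #{p : N.Partition | Multiset.card p.parts ≤ k} +
        if k + 1 ≤ N then #{p : (N - (k + 1)).Partition | Multiset.card p.parts ≤ k + 1}
        else 0 := by
  rw [Finset.filter_congr fun p _ => Nat.le_succ_iff, filter_or,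
    card_union_of_disjoint (disjoint_filter.2 fun p _ h h' => by omega)]
  split_ifs with hN
  · obtain ⟨M, rfl⟩ := Nat.exists_eq_add_of_le' hN
    rw [Nat.add_sub_cancel, card_filter_card_parts_eq]
  · rw [add_zero, add_eq_left, Finset.card_eq_zero, filter_eq_empty_iff]
    exact fun p _ h => hN (h.symm.trans_le p.card_parts_le)

def durfee {N : ℕ} (p : N.Partition) : ℕ :=
  Nat.findGreatest (fun i => i ≤ Multiset.card (p.parts.filter (i ≤ ·))) N

lemma durfee_le {N : ℕ} (p : N.Partition) : p.durfee ≤ N :=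
  Nat.findGreatest_le N

lemma durfee_eq_iff {N n : ℕ} (p : N.Partition) : p.durfee = n ↔
    n ≤ Multiset.card (p.parts.filter (n ≤ ·)) ∧
      Multiset.card (p.parts.filter (n < ·)) ≤ n := by
  have hcard (i : ℕ) : Multiset.card (p.parts.filter (i ≤ ·)) ≤ N :=
    (Multiset.card_le_card (Multiset.filter_le _ _)).trans p.card_parts_le
  rw [durfee, Nat.findGreatest_eq_iff]
  constructor
  · rintro ⟨-, hP, hmax⟩
    refine ⟨?_, not_lt.1 fun h => hmax (Nat.lt_succ_self n) ((hcard _).trans' h) h⟩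
    rcases Nat.eq_zero_or_pos n with rfl | hn
    · exact Nat.zero_le _
    · exact hP hn.ne'
  · rintro ⟨hle, hlt⟩
    refine ⟨hle.trans (hcard n), fun _ => hle, fun m hnm _ hm => ?_⟩
    have : Multiset.card (p.parts.filter (m ≤ ·)) ≤ Multiset.card (p.parts.filter (n < ·)) :=
      Multiset.card_le_card (Multiset.monotone_filter_right _ fun x hx => hnm.trans_le hx)
    omega

lemma sum_removeColumns_add_sum_belowSquare {N : ℕ} (p : N.Partition) :
    (removeColumns p.durfee p.parts).sum + (belowSquare p.durfee p.parts).sum + p.durfee ^ 2 =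
      N := by
  obtain ⟨hle, hlt⟩ := (durfee_eq_iff p).1 rfl
  have h := congrArg Multiset.sum (Multiset.addColumns_removeColumns_add_belowSquare hle)
  rw [Multiset.sum_add, Multiset.sum_addColumns (Multiset.card_removeColumns.trans_le hlt),
    p.parts_sum] at h
  rw [sq]
  linarith

lemma card_filter_durfee_eq (N n a b : ℕ) (h : a + b + n ^ 2 = N) :
    #{p : N.Partition | p.durfee = n ∧
        ((removeColumns n p.parts).sum, (belowSquare n p.parts).sum) = (a, b)} =
      #{q : a.Partition | Multiset.card q.parts ≤ n} * #(restricted b (· ≤ n)) := by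
  rw [← card_product]
  refine card_bij'
    (fun p hp => (⟨removeColumns n p.parts, Multiset.pos_of_mem_removeColumns,
        congrArg Prod.fst (mem_filter.1 hp).2.2⟩,
      ⟨belowSquare n p.parts, fun hx => p.parts_pos (Multiset.mem_and_le_of_mem_belowSquare hx).1,
        congrArg Prod.snd (mem_filter.1 hp).2.2⟩))
    (fun q hq => ⟨addColumns n n q.1.parts + q.2.parts, fun hx => ?_, ?_⟩)
    (fun p hp => ?_) (fun q hq => ?_) (fun p hp => ?_) (fun q hq => ?_)
  · rcases Multiset.mem_add.1 hx with hx | hx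
    · exact Multiset.pos_of_mem_addColumns (fun _ => q.1.parts_pos) (.inr le_rfl) hx
    · exact q.2.parts_pos hx
  · rw [Multiset.sum_add, Multiset.sum_addColumns (mem_filter.1 (mem_product.1 hq).1).2,
      q.1.parts_sum, q.2.parts_sum, ← h]
    ring
  · have hd := (durfee_eq_iff p).1 (mem_filter.1 hp).2.1
    refine mem_product.2 ⟨mem_filter.2 ⟨mem_univ _, ?_⟩, mem_filter.2 ⟨mem_univ _, ?_⟩⟩
    · exact Multiset.card_removeColumns.trans_le hd.2
    · exact fun x hx => (Multiset.mem_and_le_of_mem_belowSquare hx).2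
  · obtain ⟨hq1, hq2⟩ := mem_product.1 hq
    have hpos : ∀ x ∈ q.1.parts, 0 < x := fun _ => q.1.parts_pos
    have hle : ∀ x ∈ q.2.parts, x ≤ n := (mem_filter.1 hq2).2
    refine mem_filter.2 ⟨mem_univ _, (durfee_eq_iff _).2 ⟨?_, ?_⟩, ?_⟩
    · exact Multiset.le_card_filter_addColumns_add (mem_filter.1 hq1).2
    · rw [Multiset.filter_lt_addColumns_add hpos hle, Multiset.card_map]
      exact (mem_filter.1 hq1).2
    · rw [Multiset.removeColumns_addColumns_add hpos hle,
        Multiset.belowSquare_addColumns_add hpos hle, q.1.parts_sum, q.2.parts_sum]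
  · exact Nat.Partition.ext (Multiset.addColumns_removeColumns_add_belowSquare
      ((durfee_eq_iff p).1 (mem_filter.1 hp).2.1).1)
  · have hpos : ∀ x ∈ q.1.parts, 0 < x := fun _ => q.1.parts_pos
    have hle : ∀ x ∈ q.2.parts, x ≤ n := (mem_filter.1 (mem_product.1 hq).2).2
    exact Prod.ext (Nat.Partition.ext (Multiset.removeColumns_addColumns_add hpos hle))
      (Nat.Partition.ext (Multiset.belowSquare_addColumns_add hpos hle))

theorem card_eq_sum_durfee (N : ℕ) :
    Fintype.card N.Partition = ∑ n ∈ range (N + 1), if n ^ 2 ≤ N then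
      ∑ ab ∈ antidiagonal (N - n ^ 2),
        #{q : ab.1.Partition | Multiset.card q.parts ≤ n} * #(restricted ab.2 (· ≤ n))
      else 0 := by
  rw [← Finset.card_univ,
    card_eq_sum_card_fiberwise fun p _ => mem_range.2 (Nat.lt_succ_of_le (durfee_le p))]
  refine sum_congr rfl fun n _ => ?_
  split_ifs with hn
  · rw [card_eq_sum_card_fiberwise (t := antidiagonal (N - n ^ 2))
      (f := fun p : N.Partition => ((removeColumns n p.parts).sum, (belowSquare n p.parts).sum))]
    · refine sum_congr rfl fun ab hab => ?_
      have := HasAntidiagonal.mem_antidiagonal.1 hab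
      rw [filter_filter, card_filter_durfee_eq N n ab.1 ab.2 (by omega)]
    · intro p hp
      have := sum_removeColumns_add_sum_belowSquare p
      rw [(mem_filter.1 (mem_coe.1 hp)).2] at this
      rw [mem_coe, HasAntidiagonal.mem_antidiagonal]
      dsimp only
      omega
  · refine Finset.card_eq_zero.2 (filter_eq_empty_iff.2 fun p _ hp => hn ?_)
    have := sum_removeColumns_add_sum_belowSquare p
    rw [hp] at this
    omega

end Nat.Partition

noncomputable def qPoch (R : Type) [CommRing R] (n : ℕ) : R⟦X⟧ :=
  ∏ k ∈ range n, (1 - X ^ (k + 1))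

section qPoch

variable (R : Type) [CommRing R]

lemma qPoch_succ (n : ℕ) : qPoch R (n + 1) = qPoch R n * (1 - X ^ (n + 1)) :=
  prod_range_succ _ _

lemma constantCoeff_qPoch (n : ℕ) : constantCoeff (qPoch R n) = 1 := by
  simp [qPoch]

lemma qPochFin_eq_qPoch (n : ℕ) : qPochFin n = qPoch ℤ n :=
  prod_Icc_one_eq_prod_range _ n

lemma coeff_qPoch_of_le {i n : ℕ} (h : i ≤ n) : coeff i (qPoch R n) = coeff i (qPoch R i) := by
  induction n, h using Nat.le_induction with
  | base => rfl
  | succ n hin ih =>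
    rw [qPoch_succ, mul_sub, mul_one, map_sub, coeff_mul_X_pow', if_neg (by omega), sub_zero, ih]

lemma coeff_qPochInf_one {i n : ℕ} (h : i ≤ n) :
    coeff i (qPochInf R 1) = coeff i (qPoch R n) := by
  simp_rw [qPochInf, coeff_mk, one_mul, prod_Icc_one_eq_prod_range]
  exact (coeff_qPoch_of_le R h).symm

lemma constantCoeff_qPochInf_one : constantCoeff (qPochInf R 1) = 1 := by
  rw [← coeff_zero_eq_constantCoeff_apply, coeff_qPochInf_one R le_rfl,
    coeff_zero_eq_constantCoeff_apply, constantCoeff_qPoch]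

/-- Euler's product `∏_{i ≤ n} ∑_j X^{ij}`, read in the discrete topology on `R`. -/
lemma qPoch_mul_mk_card_restricted_le (n : ℕ) :
    qPoch R n * PowerSeries.mk (fun N => (#(Nat.Partition.restricted N (· ≤ n)) : R)) = 1 := by
  let _ : TopologicalSpace R := ⊥
  have _ : DiscreteTopology R := ⟨rfl⟩
  open PowerSeries.WithPiTopology in
  rw [(Nat.Partition.hasProd_powerSeriesMk_card_restricted R (· ≤ n)).tprod_eq.symm,
    tprod_eq_prod (s := range n) (fun i hi => if_neg (by simpa using hi)), qPoch,
    ← prod_mul_distrib]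
  refine prod_eq_one fun i hi => ?_
  rw [if_pos (by simpa [Nat.succ_le_iff] using hi)]
  simp_rw [pow_mul]
  exact one_sub_mul_tsum_pow_of_constantCoeff_eq_zero (by simp)

lemma qPoch_mul_mk_card_filter_card_parts_le (n : ℕ) :
    qPoch R n * PowerSeries.mk
      (fun N => (#{p : N.Partition | Multiset.card p.parts ≤ n} : R)) = 1 := by
  induction n with
  | zero =>
    ext N
    rw [qPoch, range_zero, prod_empty, one_mul, coeff_mk,
      Nat.Partition.card_filter_card_parts_le_zero, coeff_one]
    split_ifs <;> simp
  | succ n ih =>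
    have h : (1 - X ^ (n + 1)) *
          PowerSeries.mk (fun N => (#{p : N.Partition | Multiset.card p.parts ≤ n + 1} : R)) =
        PowerSeries.mk (fun N => (#{p : N.Partition | Multiset.card p.parts ≤ n} : R)) := by
      ext N
      rw [sub_mul, one_mul, map_sub, coeff_X_pow_mul', coeff_mk, coeff_mk,
        Nat.Partition.card_filter_card_parts_le_succ]
      split_ifs <;> simp
    rw [qPoch_succ, mul_assoc, h, ih]

end qPoch

lemma Nat.Partition.card_filter_card_parts_le_eq_card_restricted (n N : ℕ) :
    #{p : N.Partition | Multiset.card p.parts ≤ n} = #(restricted N (· ≤ n)) := by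
  have h := left_inv_eq_right_inv
    ((mul_comm _ _).trans (qPoch_mul_mk_card_filter_card_parts_le ℤ n))
    (qPoch_mul_mk_card_restricted_le ℤ n)
  simpa using congrArg (coeff N) h

section Jacobi

variable (R : Type) [CommRing R]

lemma coeff_sum_X_pow_sq_mul_sq {G : ℕ → R⟦X⟧} (hG : ∀ n, qPoch R n * G n = 1) (N : ℕ) :
    coeff N (∑ n ∈ range (N + 1), X ^ (n ^ 2) * G n ^ 2) = (Fintype.card N.Partition : R) := by
  have hG' (n : ℕ) :
      G n = PowerSeries.mk fun N => (#(Nat.Partition.restricted N (· ≤ n)) : R) :=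
    left_inv_eq_right_inv ((mul_comm _ _).trans (hG n)) (qPoch_mul_mk_card_restricted_le R n)
  rw [map_sum, Nat.Partition.card_eq_sum_durfee, Nat.cast_sum]
  refine sum_congr rfl fun n _ => ?_
  rw [coeff_X_pow_mul', sq (G n), coeff_mul]
  split_ifs
  · push_cast
    refine sum_congr rfl fun ab _ => ?_
    rw [Nat.Partition.card_filter_card_parts_le_eq_card_restricted, hG', coeff_mk, coeff_mk]
  · rw [Nat.cast_zero]

lemma qPochInf_one_mul_mk_card_partition :
    qPochInf R 1 * PowerSeries.mk (fun N => (Fintype.card N.Partition : R)) = 1 := by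
  ext N
  rw [← qPoch_mul_mk_card_restricted_le R N, coeff_mul, coeff_mul]
  refine sum_congr rfl fun ij hij => ?_
  have hij := HasAntidiagonal.mem_antidiagonal.1 hij
  rw [coeff_qPochInf_one R (by omega : ij.1 ≤ N), coeff_mk, coeff_mk, ← Finset.card_univ]
  congr 3
  exact (filter_true_of_mem fun p _ i hi =>
    (Nat.Partition.le_of_mem_parts hi).trans (by omega)).symm

end Jacobi

lemma jacobiQSum_eq : jacobiQSum = PowerSeries.mk fun N => (Fintype.card N.Partition : ℤ) := by
  ext N
  rw [jacobiQSum, coeff_mk, coeff_mk]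
  refine coeff_sum_X_pow_sq_mul_sq ℤ (fun n => ?_) N
  rw [← qPochFin_eq_qPoch]
  exact mul_invOfUnit _ _ (by rw [qPochFin_eq_qPoch, constantCoeff_qPoch, Units.val_one])

instance PowerSeries.instCharP (R : Type*) [CommRing R] (p : ℕ) [CharP R p] : CharP R⟦X⟧ p :=
  charP_of_injective_algebraMap (by rw [algebraMap_eq]; exact C_injective) p

section CharTwo

variable {R : Type} [CommRing R] [CharP R 2]

lemma prod_range_one_add_X_pow (m : ℕ) :
    ∏ k ∈ range m, (1 + X ^ (k + 1) : R⟦X⟧) = qPoch R m := by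
  simp_rw [qPoch, CharTwo.sub_eq_add]

lemma qPoch_two_mul (n : ℕ) :
    qPoch R (2 * n) = (∏ i ∈ range n, (1 - X ^ (2 * i + 1))) * qPoch R n ^ 2 := by
  rw [qPoch, prod_range_two_mul, qPoch, ← prod_pow]
  congr 1
  refine prod_congr rfl fun i _ => ?_
  rw [sub_pow_char, one_pow, ← pow_mul]
  ring_nf

lemma phi6_term_eq {K : Type} [Field K] [CharP K 2] (n : ℕ) :
    (-1 : K⟦X⟧) ^ n * (∏ k ∈ range n, (1 - X ^ (2 * k + 1))) * X ^ (n ^ 2) *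
        (∏ k ∈ range (2 * n), (1 + X ^ (k + 1)))⁻¹ = X ^ (n ^ 2) * (qPoch K n)⁻¹ ^ 2 := by
  rw [CharTwo.neg_eq, one_pow, one_mul, prod_range_one_add_X_pow, qPoch_two_mul,
    PowerSeries.mul_inv_rev, sq (qPoch K n), PowerSeries.mul_inv_rev]
  set O : K⟦X⟧ := ∏ k ∈ range n, (1 - X ^ (2 * k + 1))
  have hO : constantCoeff O ≠ 0 := by simp [O]
  calc O * X ^ (n ^ 2) * ((qPoch K n)⁻¹ * (qPoch K n)⁻¹ * O⁻¹)
      = X ^ (n ^ 2) * (qPoch K n)⁻¹ ^ 2 * (O * O⁻¹) := by ring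
    _ = X ^ (n ^ 2) * (qPoch K n)⁻¹ ^ 2 := by rw [PowerSeries.mul_inv_cancel O hO, mul_one]

end CharTwo

lemma phi6_eq : phi6 = PowerSeries.mk fun N => (Fintype.card N.Partition : ZMod 2) := by
  ext N
  simp_rw [phi6, coeff_mk, phi6_term_eq]
  exact coeff_sum_X_pow_sq_mul_sq (ZMod 2)
    (fun n => PowerSeries.mul_inv_cancel _ (by simp [constantCoeff_qPoch])) N

/-- Jacobi's identity ∑_{n≥0} q^(n²)/((q)_n)² = 1/(q)_∞ in ℤ[[q]]; consequently
φ₆(q) ≡ 1/(q)_∞ (mod 2), i.e. c_{φ₆}(n) ≡ p(n) (mod 2). -/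
theorem jacobi_identity_and_phi6_mod_two :
    jacobiQSum = PowerSeries.invOfUnit (qPochInf ℤ 1) 1 ∧
    phi6 = (qPochInf (ZMod 2) 1)⁻¹ ∧
    ∀ n : ℕ, PowerSeries.coeff (R := ZMod 2) n phi6 =
      (Fintype.card (Nat.Partition n) : ZMod 2) := by
  refine ⟨?_, ?_, fun n => by rw [phi6_eq, coeff_mk]⟩
  · rw [jacobiQSum_eq]
    exact (left_inv_eq_right_inv (invOfUnit_mul _ 1 (by simp [constantCoeff_qPochInf_one]))
      (qPochInf_one_mul_mk_card_partition ℤ)).symm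
  · rw [phi6_eq, PowerSeries.eq_inv_iff_mul_eq_one (by simp [constantCoeff_qPochInf_one]),
      mul_comm, qPochInf_one_mul_mk_card_partition]
end
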